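/- arXiv:1210.7415 — 3 statements merged into one kernel-verified Lean document; each statement's English description precedes it below -/
import Mathlib

section
/- Let n ≥ 1 and let d_1, …, d_n be real numbers with 0 ≤ d_j ≤ 1. In the ring of 2×2 matrices with entries in the polynomial ring ℝ[q_0, …, q_{n−1}], set M = (I + d_n A)(B_0 + q_{n−1} B_1)(I + d_{n−1} A)(B_0 + q_{n−2} B_1) ⋯ (I + d_1 A)(B_0 + q_0 B_1), where A = [[0,1],[1,0]], B_0 = [[0,0],[0,1]], B_1 = [[1,0],[0,0]], and write M = [[a, b],[c, d]]. Let P = Π_{j=1}^n (1 + d_j) and p = Π_{j=1}^n (1 − d_j). Then: (i) each of the polynomials a, b, c, d has nonnegative coefficients; (ii) a(1,…,1) = d(1,…,1) = (P + p)/2 and b(1,…,1) = c(1,…,1) = (P − p)/2 (so, since the coefficients are nonnegative, these values equal the sums of the absolute values of the coefficients of a, d, b, c respectively); (iii) the coefficient of the monomial q_0 q_1 ⋯ q_{n−1} in a equals 1; (iv) the constant coefficient of d equals 1. -/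
open Matrix MvPolynomial

noncomputable section

/-- The matrix `A = [[0,1],[1,0]]` over `ℝ[q_0,…,q_{n-1}]`. -/
def Amat (n : ℕ) : Matrix (Fin 2) (Fin 2) (MvPolynomial (Fin n) ℝ) := !![0, 1; 1, 0]

/-- The matrix `B₀ = [[0,0],[0,1]]` over `ℝ[q_0,…,q_{n-1}]`. -/
def B0mat (n : ℕ) : Matrix (Fin 2) (Fin 2) (MvPolynomial (Fin n) ℝ) := !![0, 0; 0, 1]

/-- The matrix `B₁ = [[1,0],[0,0]]` over `ℝ[q_0,…,q_{n-1}]`. -/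
def B1mat (n : ℕ) : Matrix (Fin 2) (Fin 2) (MvPolynomial (Fin n) ℝ) := !![1, 0; 0, 0]

/-- The transfer matrix `M = (I + dₙA)(B₀ + q_{n-1}B₁) ⋯ (I + d₁A)(B₀ + q₀B₁)`
(indices written `0,…,n-1` in Lean). -/
def transferM (n : ℕ) (d : Fin n → ℝ) : Matrix (Fin 2) (Fin 2) (MvPolynomial (Fin n) ℝ) :=
  (List.ofFn fun j : Fin n =>
      ((1 : Matrix (Fin 2) (Fin 2) (MvPolynomial (Fin n) ℝ)) + (C (d j) : MvPolynomial (Fin n) ℝ) • Amat n) *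
        (B0mat n + (X j : MvPolynomial (Fin n) ℝ) • B1mat n)).reverse.prod

/-!
Write the `j`-th factor as `(I + t A)(B₀ + x B₁) = !![x, t; t x, 1]` with `t = d_j`, `x = q_j`.
Three of the claims are read off from the image of the product under a ring homomorphism.
The product is the image of the same product over `ℝ≥0[q]`, so its coefficients are
nonnegative. At `q = 1` every factor `!![1, t; t, 1]` has the eigenvectors `(1, 1)` and
`(1, -1)` with eigenvalues `1 + t` and `1 - t`, which gives the values `(P ± p)/2`. At `q = 0`
every factor has bottom row `(0, 1)`, so the constant term of `d` is `1`.
For the coefficient of `q₀ ⋯ q_{n-1}` in `a`, multiplying by the factor of `q_j` on the left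
turns `a` into `q_j a + t c`, where `c` does not involve `q_j`.
-/

section CommSemiring

variable {σ R : Type*} [CommSemiring R]

def transferFactor (t x : R) : Matrix (Fin 2) (Fin 2) R := !![x, t; t * x, 1]

def transferProd (l : List σ) (t x : σ → R) : Matrix (Fin 2) (Fin 2) R :=
  (l.map fun j => transferFactor (t j) (x j)).prod

@[simp]
lemma transferProd_nil (t x : σ → R) : transferProd [] t x = 1 := rfl

@[simp]
lemma transferProd_cons (j : σ) (l : List σ) (t x : σ → R) :
    transferProd (j :: l) t x = transferFactor (t j) (x j) * transferProd l t x := rfl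

lemma RingHom.mapMatrix_transferProd {S : Type*} [CommSemiring S] (f : R →+* S) (l : List σ)
    (t x : σ → R) :
    f.mapMatrix (transferProd l t x) = transferProd l (fun j => f (t j)) (fun j => f (x j)) := by
  induction l with
  | nil => exact map_one _
  | cons j l ih =>
    rw [transferProd_cons, map_mul, ih, transferProd_cons]
    congr 1
    ext i k
    fin_cases i <;> fin_cases k <;> simp [transferFactor]

lemma transferProd_zero_apply_one_one (l : List σ) (t : σ → R) :
    transferProd l t (fun _ => 0) 1 1 = 1 := by
  induction l with
  | nil => rfl
  | cons j l ih => simp [transferFactor, Matrix.mul_apply, ih]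

lemma MvPolynomial.coeff_eq_zero_of_mem_supported {p : MvPolynomial σ R} {s : Set σ}
    (hp : p ∈ supported R s) {m : σ →₀ ℕ} {j : σ} (hj : j ∉ s) (hm : m j ≠ 0) :
    coeff m p = 0 := by
  by_contra h
  exact hm <| mem_support_notMem_vars_zero (mem_support_iff.mpr h) fun hv =>
    hj (mem_supported.mp hp hv)

lemma transferProd_mem_supported (l : List σ) (t : σ → R) (i k : Fin 2) :
    transferProd l (fun j => C (t j)) X i k ∈ supported R {j | j ∈ l} := by
  induction l generalizing i k with
  | nil => by_cases h : i = k <;> simp [h]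
  | cons j l ih =>
    set S := supported R {i | i ∈ j :: l}
    have hX : (X j : MvPolynomial σ R) ∈ S :=
      Algebra.subset_adjoin ⟨j, List.mem_cons_self, rfl⟩
    have hC : C (t j) ∈ S := Subalgebra.algebraMap_mem _ (t j)
    have hl (i k : Fin 2) : transferProd l (fun j => C (t j)) X i k ∈ S :=
      supported_mono (fun i hi => List.mem_cons_of_mem j hi) (ih i k)
    rw [transferProd_cons, Matrix.mul_apply, Fin.sum_univ_two]
    fin_cases i <;> simp [transferFactor]
    · exact add_mem (mul_mem hX (hl 0 k)) (mul_mem hC (hl 1 k))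
    · exact add_mem (mul_mem (mul_mem hC hX) (hl 0 k)) (hl 1 k)

lemma coeff_transferProd_zero_zero {l : List σ} (hl : l.Nodup) (t : σ → R) :
    coeff (l.map fun j => Finsupp.single j 1).sum
      (transferProd l (fun j => C (t j)) X 0 0) = 1 := by
  induction l with
  | nil => simp
  | cons j l ih =>
    obtain ⟨hj, hl⟩ := List.nodup_cons.mp hl
    rw [List.map_cons, List.sum_cons, transferProd_cons, Matrix.mul_apply, Fin.sum_univ_two]
    have hc := coeff_eq_zero_of_mem_supported (transferProd_mem_supported l t 1 0) hj
      (m := Finsupp.single j 1 + (l.map fun j => Finsupp.single j 1).sum) (by simp)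
    simp [transferFactor, coeff_C_mul, hc, coeff_X_mul, ih hl]

lemma constantCoeff_transferProd_one_one (l : List σ) (t : σ → R) :
    constantCoeff (transferProd l (fun j => C (t j)) X 1 1) = 1 := by
  have h := congrFun₂ (constantCoeff.mapMatrix_transferProd l (fun j => C (t j)) X) 1 1
  simp only [RingHom.mapMatrix_apply, Matrix.map_apply, constantCoeff_C, constantCoeff_X] at h
  rw [h, transferProd_zero_apply_one_one]

end CommSemiring

section CommRing

variable {σ R : Type*} [CommRing R]

lemma two_smul_transferProd_one (l : List σ) (t : σ → R) :
    (2 : R) • transferProd l t (fun _ => 1) =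
      !![(l.map (1 + t ·)).prod + (l.map (1 - t ·)).prod,
         (l.map (1 + t ·)).prod - (l.map (1 - t ·)).prod;
         (l.map (1 + t ·)).prod - (l.map (1 - t ·)).prod,
         (l.map (1 + t ·)).prod + (l.map (1 - t ·)).prod] := by
  induction l with
  | nil => ext i k; fin_cases i <;> fin_cases k <;> norm_num
  | cons j l ih =>
    rw [transferProd_cons, ← Matrix.mul_smul, ih]
    ext i k
    fin_cases i <;> fin_cases k <;> simp [transferFactor, Matrix.mul_apply] <;> ring

lemma two_smul_eval_one_transferProd (l : List σ) (t : σ → R) :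
    (2 : R) • (eval fun _ => 1).mapMatrix (transferProd l (fun j => C (t j)) X) =
      !![(l.map (1 + t ·)).prod + (l.map (1 - t ·)).prod,
         (l.map (1 + t ·)).prod - (l.map (1 - t ·)).prod;
         (l.map (1 + t ·)).prod - (l.map (1 - t ·)).prod,
         (l.map (1 + t ·)).prod + (l.map (1 - t ·)).prod] := by
  rw [RingHom.mapMatrix_transferProd]
  simpa using two_smul_transferProd_one l t

end CommRing

lemma coeff_transferProd_nonneg {σ : Type*} (l : List σ) {t : σ → ℝ} (ht : ∀ j, 0 ≤ t j)
    (i k : Fin 2) (m : σ →₀ ℕ) :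
    0 ≤ coeff m (transferProd l (fun j => C (t j)) X i k) := by
  have hlift : transferProd l (fun j => C (t j)) X =
      (map NNReal.toRealHom).mapMatrix (transferProd l (fun j => C (t j).toNNReal) X) := by
    rw [RingHom.mapMatrix_transferProd]
    simp only [map_C, map_X, NNReal.coe_toRealHom, Real.coe_toNNReal _ (ht _)]
  rw [hlift, RingHom.mapMatrix_apply, Matrix.map_apply, coeff_map]
  exact NNReal.coe_nonneg _

lemma transferM_eq_transferProd (n : ℕ) (d : Fin n → ℝ) :
    transferM n d = transferProd (List.finRange n).reverse (fun j => C (d j)) X := by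
  rw [transferM, transferProd, List.ofFn_eq_map, List.map_reverse]
  congr 3
  funext j
  ext i k
  fin_cases i <;> fin_cases k <;>
    simp [Amat, B0mat, B1mat, transferFactor, Matrix.mul_apply, Fin.sum_univ_two]

theorem transferM_entries_general (n : ℕ) (d : Fin n → ℝ)
    (hd : ∀ j, 0 ≤ d j ∧ d j ≤ 1) :
    (∀ (i j : Fin 2) (mono : Fin n →₀ ℕ), 0 ≤ coeff mono (transferM n d i j)) ∧
    eval (fun _ => (1 : ℝ)) (transferM n d 0 0) = (∏ j, (1 + d j) + ∏ j, (1 - d j)) / 2 ∧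
    eval (fun _ => (1 : ℝ)) (transferM n d 1 1) = (∏ j, (1 + d j) + ∏ j, (1 - d j)) / 2 ∧
    eval (fun _ => (1 : ℝ)) (transferM n d 0 1) = (∏ j, (1 + d j) - ∏ j, (1 - d j)) / 2 ∧
    eval (fun _ => (1 : ℝ)) (transferM n d 1 0) = (∏ j, (1 + d j) - ∏ j, (1 - d j)) / 2 ∧
    coeff (Finsupp.equivFunOnFinite.symm fun _ => 1) (transferM n d 0 0) = 1 ∧
    coeff 0 (transferM n d 1 1) = 1 := by
  have hEval := two_smul_eval_one_transferProd (List.finRange n).reverse d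
  simp [List.map_reverse, List.prod_reverse, ← Fin.prod_univ_def, ← Matrix.ext_iff,
    Fin.forall_fin_two] at hEval
  have hMono : ((List.finRange n).reverse.map fun j => Finsupp.single j 1).sum =
      Finsupp.equivFunOnFinite.symm fun _ => 1 := by
    simp [List.map_reverse, List.sum_reverse, ← Fin.sum_univ_def,
      Finsupp.equivFunOnFinite_symm_eq_sum]
  rw [transferM_eq_transferProd, ← hMono]
  refine ⟨coeff_transferProd_nonneg _ (fun j => (hd j).1), ?_, ?_, ?_, ?_,
    coeff_transferProd_zero_zero (List.nodup_reverse.mpr (List.nodup_finRange n)) d,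
    constantCoeff_transferProd_one_one _ d⟩ <;> linarith

/-- Properties of the entries `a = M₀₀`, `b = M₀₁`, `c = M₁₀`, `d = M₁₁` of the transfer
matrix: nonnegative coefficients, values at `q = (1,…,1)` equal to `(P±p)/2`, the coefficient
of `q₀⋯q_{n-1}` in `a` is `1`, and the constant coefficient of `d` is `1`. -/
theorem transferM_entries (n : ℕ) (hn : 1 ≤ n) (d : Fin n → ℝ)
    (hd : ∀ j, 0 ≤ d j ∧ d j ≤ 1) :
    (∀ (i j : Fin 2) (mono : Fin n →₀ ℕ), 0 ≤ coeff mono (transferM n d i j)) ∧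
    eval (fun _ => (1 : ℝ)) (transferM n d 0 0) = (∏ j, (1 + d j) + ∏ j, (1 - d j)) / 2 ∧
    eval (fun _ => (1 : ℝ)) (transferM n d 1 1) = (∏ j, (1 + d j) + ∏ j, (1 - d j)) / 2 ∧
    eval (fun _ => (1 : ℝ)) (transferM n d 0 1) = (∏ j, (1 + d j) - ∏ j, (1 - d j)) / 2 ∧
    eval (fun _ => (1 : ℝ)) (transferM n d 1 0) = (∏ j, (1 + d j) - ∏ j, (1 - d j)) / 2 ∧
    coeff (Finsupp.equivFunOnFinite.symm fun _ => 1) (transferM n d 0 0) = 1 ∧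
    coeff 0 (transferM n d 1 1) = 1 :=
  transferM_entries_general n d hd

end
end

section
/- For every x with 0 < x < log(2 + √3) one has f_1(x) ≤ sinh x / (2 − cosh x); that is, for every partition t ∈ A_x, ‖R(t)‖ ≤ sinh x / (2 − cosh x). -/
noncomputable section

/-- The Möbius substitution `γ(τ) : z ↦ (z + tanh τ)/(1 + tanh τ · z)` acting on formal
power series; the denominator has constant term `1`, hence is invertible, and the division
is carried out in the ring of formal power series. -/
def gam (τ : ℝ) (z : MvPowerSeries ℕ ℝ) : MvPowerSeries ℕ ℝ :=
  (z + MvPowerSeries.C (σ := ℕ) (R := ℝ) (Real.tanh τ)) * (1 + MvPowerSeries.C (σ := ℕ) (R := ℝ) (Real.tanh τ) * z)⁻¹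

/-- `Rser t n` is the formal power series
`R(t₁,…,tₙ) = (γ(tₙ) ∘ α(q_{n-1}) ∘ γ(t_{n-1}) ∘ ⋯ ∘ α(q₁) ∘ γ(t₁))(0)` in the variables
`q₁,…,q_{n-1}`, where `α(q)` is multiplication by `q` (Lean `t k` is the paper's `t_{k+1}`,
and the variable `X k` is the paper's `q_k`; note `X 0` is multiplied into `0`, so it does
not occur). -/
def Rser (t : ℕ → ℝ) : ℕ → MvPowerSeries ℕ ℝ
  | 0 => 0
  | n + 1 => gam (t n) (MvPowerSeries.X n * Rser t n)

/-- The norm `‖F‖ ∈ [0,∞]` of a formal power series `F = Σ_j a_j q^j`: the sum of the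
absolute values of its coefficients. -/
def psNorm (F : MvPowerSeries ℕ ℝ) : ENNReal :=
  ∑' j : ℕ →₀ ℕ, ENNReal.ofReal |MvPowerSeries.coeff (R := ℝ) j F|

/-- `fF r x = sup_{t ∈ A_x} ‖R(t)^r‖ ∈ [0,∞]`, the supremum over all partitions
`t = (t₁,…,tₙ)`, `n ≥ 1`, of positive reals with `t₁ + ⋯ + tₙ = x`. -/
def fF (r : ℕ) (x : ℝ) : ENNReal :=
  ⨆ (n : ℕ) (t : ℕ → ℝ) (_ : 1 ≤ n) (_ : ∀ i < n, 0 < t i)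
    (_ : ∑ i ∈ Finset.range n, t i = x), psNorm (Rser t n ^ r)

/-! For `z` without constant term, expanding `(1 + T z)⁻¹` as a geometric series gives
`‖γ(τ) z‖ ≤ (‖z‖ + T) / (1 - T ‖z‖)` with `T = |tanh τ|`, and `α(q)` does not increase the norm.
Since `0 ≤ tanh τ ≤ tan τ` and `(tan σ + tan τ) / (1 - tan σ tan τ) = tan (σ + τ)`, induction
on `n` gives `‖R(t)‖ ≤ tan (t₁ + ⋯ + tₙ)` as long as the sum stays below `π / 2`. Finally
`tan x ≤ sinh x / (2 - cosh x)` for `0 ≤ x < arcosh 2`, because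
`cos x sinh x - sin x (2 - cosh x)` vanishes at `0` and has derivative `2 cos x (cosh x - 1) ≥ 0`. -/

open MvPowerSeries Real Set Finset
open scoped ENNReal MvPowerSeries.WithPiTopology

theorem ENNReal.tsum_sum_antidiagonal {A : Type*} [AddCommMonoid A] [HasAntidiagonal A]
    (f : A × A → ℝ≥0∞) : ∑' n, ∑ p ∈ antidiagonal n, f p = ∑' p, f p := by
  rw [← HasAntidiagonal.sigmaAntidiagonalEquivProd.tsum_eq, ENNReal.tsum_sigma']
  exact tsum_congr fun n => (Finset.tsum_subtype _ f).symm

theorem psNorm_eq_tsum_enorm (F : MvPowerSeries ℕ ℝ) : psNorm F = ∑' j, ‖coeff j F‖ₑ := by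
  simp only [psNorm, enorm_eq_ofReal_abs]

theorem psNorm_neg (F : MvPowerSeries ℕ ℝ) : psNorm (-F) = psNorm F := by
  simp only [psNorm_eq_tsum_enorm, map_neg, enorm_neg]

theorem psNorm_add_le (F G : MvPowerSeries ℕ ℝ) : psNorm (F + G) ≤ psNorm F + psNorm G := by
  simp only [psNorm_eq_tsum_enorm, map_add, ← ENNReal.tsum_add]
  exact ENNReal.tsum_le_tsum fun j => enorm_add_le _ _

theorem psNorm_mul_le (F G : MvPowerSeries ℕ ℝ) : psNorm (F * G) ≤ psNorm F * psNorm G := by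
  simp only [psNorm_eq_tsum_enorm]
  calc ∑' j, ‖coeff j (F * G)‖ₑ
      ≤ ∑' j, ∑ p ∈ antidiagonal j, ‖coeff p.1 F‖ₑ * ‖coeff p.2 G‖ₑ := by
        refine ENNReal.tsum_le_tsum fun j => ?_
        rw [coeff_mul]
        exact (enorm_sum_le _ _).trans_eq (by simp only [enorm_mul])
    _ = ∑' p : (ℕ →₀ ℕ) × (ℕ →₀ ℕ), ‖coeff p.1 F‖ₑ * ‖coeff p.2 G‖ₑ :=
        ENNReal.tsum_sum_antidiagonal fun p => ‖coeff p.1 F‖ₑ * ‖coeff p.2 G‖ₑ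
    _ = _ := by
        rw [ENNReal.tsum_prod', ← ENNReal.tsum_mul_right]
        simp only [ENNReal.tsum_mul_left]

theorem psNorm_C (r : ℝ) : psNorm (C r) = ‖r‖ₑ := by
  classical
  rw [psNorm_eq_tsum_enorm, tsum_eq_single 0 fun j hj => by simp [coeff_C, hj]]
  simp

theorem psNorm_X (n : ℕ) : psNorm (X n) = 1 := by
  classical
  rw [psNorm_eq_tsum_enorm, tsum_eq_single (Finsupp.single n 1) fun j hj => by simp [coeff_X, hj]]
  simp

theorem psNorm_pow_le (F : MvPowerSeries ℕ ℝ) (k : ℕ) : psNorm (F ^ k) ≤ psNorm F ^ k := by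
  induction k with
  | zero => simpa using (psNorm_C 1).le
  | succ k ih =>
    rw [pow_succ, pow_succ]
    exact (psNorm_mul_le _ _).trans (by gcongr)

theorem psNorm_tsum_le {ι : Type*} {f : ι → MvPowerSeries ℕ ℝ} (hf : Summable f) :
    psNorm (∑' i, f i) ≤ ∑' i, psNorm (f i) := by
  simp only [psNorm_eq_tsum_enorm]
  rw [ENNReal.tsum_comm]
  refine ENNReal.tsum_le_tsum fun j => ?_
  rw [← (WithPiTopology.hasSum_iff_hasSum_coeff.mp hf.hasSum j).tsum_eq]
  exact enorm_tsum_le_tsum_enorm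

theorem psNorm_inv_one_sub_le {w : MvPowerSeries ℕ ℝ} (hw : constantCoeff w = 0) :
    psNorm (1 - w)⁻¹ ≤ (1 - psNorm w)⁻¹ := by
  have hgeom : (1 - w)⁻¹ = ∑' k, w ^ k :=
    (MvPowerSeries.inv_eq_iff_mul_eq_one (by simp [hw])).mpr
      (WithPiTopology.tsum_pow_mul_one_sub_of_constantCoeff_eq_zero hw)
  calc psNorm (1 - w)⁻¹ ≤ ∑' k, psNorm (w ^ k) :=
        hgeom ▸ psNorm_tsum_le (WithPiTopology.summable_pow_of_constantCoeff_eq_zero hw)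
    _ ≤ ∑' k, psNorm w ^ k := ENNReal.tsum_le_tsum (psNorm_pow_le w)
    _ = (1 - psNorm w)⁻¹ := ENNReal.tsum_geometric _

theorem psNorm_gam_le (τ : ℝ) {z : MvPowerSeries ℕ ℝ} (hz : constantCoeff z = 0) :
    psNorm (gam τ z) ≤ (psNorm z + ‖tanh τ‖ₑ) * (1 - ‖tanh τ‖ₑ * psNorm z)⁻¹ := by
  rw [gam, ← sub_neg_eq_add 1]
  refine (psNorm_mul_le _ _).trans (mul_le_mul' ?_ ?_)
  · exact (psNorm_add_le _ _).trans_eq (by rw [psNorm_C])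
  · refine (psNorm_inv_one_sub_le (by simp [hz])).trans ?_
    rw [psNorm_neg]
    gcongr
    exact (psNorm_mul_le _ _).trans_eq (by rw [psNorm_C])

theorem nonneg_of_hasDerivAt_nonneg {f f' : ℝ → ℝ} {x : ℝ} (hx : 0 ≤ x)
    (hf : ∀ y, HasDerivAt f (f' y) y) (hf' : ∀ y ∈ Ioo 0 x, 0 ≤ f' y) (hf0 : f 0 = 0) :
    0 ≤ f x := by
  have hmono : MonotoneOn f (Icc 0 x) :=
    monotoneOn_of_hasDerivWithinAt_nonneg (convex_Icc 0 x)
      (fun y _ => (hf y).continuousAt.continuousWithinAt)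
      (fun y _ => (hf y).hasDerivWithinAt) (by simpa only [interior_Icc] using hf')
  simpa only [hf0] using hmono (left_mem_Icc.mpr hx) (right_mem_Icc.mpr hx) hx

theorem Real.tanh_nonneg {τ : ℝ} (hτ : 0 ≤ τ) : 0 ≤ tanh τ := by
  rw [tanh_eq_sinh_div_cosh]
  exact div_nonneg (sinh_nonneg_iff.mpr hτ) (cosh_pos τ).le

theorem Real.tanh_le_self {τ : ℝ} (hτ : 0 ≤ τ) : tanh τ ≤ τ := by
  have h : 0 ≤ τ * cosh τ - sinh τ := by
    refine nonneg_of_hasDerivAt_nonneg (f := fun s => s * cosh s - sinh s) hτ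
      (fun y => ((hasDerivAt_id y).mul (hasDerivAt_cosh y)).sub (hasDerivAt_sinh y))
      (fun y hy => ?_) (by simp)
    have := mul_nonneg hy.1.le (sinh_nonneg_iff.mpr hy.1.le)
    simp only [id, one_mul]
    linarith
  rw [tanh_eq_sinh_div_cosh, div_le_iff₀ (cosh_pos τ)]
  linarith

theorem Real.tan_mul_tan_lt_one {σ τ : ℝ} (hσ : 0 ≤ σ) (hτ : 0 ≤ τ) (h : σ + τ < π / 2) :
    tan σ * tan τ < 1 := by
  have hcos_add : 0 < cos (σ + τ) := cos_pos_of_mem_Ioo ⟨by linarith [pi_pos], h⟩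
  rw [cos_add] at hcos_add
  rw [tan_eq_sin_div_cos, tan_eq_sin_div_cos, div_mul_div_comm, div_lt_one (mul_pos
    (cos_pos_of_mem_Ioo ⟨by linarith [pi_pos], by linarith⟩)
    (cos_pos_of_mem_Ioo ⟨by linarith [pi_pos], by linarith⟩))]
  linarith

theorem ENNReal.ofReal_tan_add {σ τ : ℝ} (hσ : 0 ≤ σ) (hτ : 0 ≤ τ) (h : σ + τ < π / 2) :
    ENNReal.ofReal (tan (σ + τ)) =
      (ENNReal.ofReal (tan σ) + ENNReal.ofReal (tan τ)) *
        (1 - ENNReal.ofReal (tan τ) * ENNReal.ofReal (tan σ))⁻¹ := by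
  have hσ' : 0 ≤ tan σ := tan_nonneg_of_nonneg_of_le_pi_div_two hσ (by linarith)
  have hτ' : 0 ≤ tan τ := tan_nonneg_of_nonneg_of_le_pi_div_two hτ (by linarith)
  have hlt := tan_mul_tan_lt_one hσ hτ h
  rw [tan_add' ⟨cos_ne_zero_iff.mp (cos_pos_of_mem_Ioo ⟨by linarith [pi_pos], by linarith⟩).ne',
      cos_ne_zero_iff.mp (cos_pos_of_mem_Ioo ⟨by linarith [pi_pos], by linarith⟩).ne'⟩,
    div_eq_mul_inv, ENNReal.ofReal_mul (by positivity), ENNReal.ofReal_add hσ' hτ',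
    ENNReal.ofReal_inv_of_pos (by linarith), ENNReal.ofReal_sub _ (by positivity),
    ENNReal.ofReal_one, ENNReal.ofReal_mul hσ', mul_comm (ENNReal.ofReal (tan σ))]

theorem psNorm_Rser_le_tan (t : ℕ → ℝ) (n : ℕ) (ht : ∀ i < n, 0 ≤ t i)
    (hsum : ∑ i ∈ range n, t i < π / 2) :
    psNorm (Rser t n) ≤ ENNReal.ofReal (tan (∑ i ∈ range n, t i)) := by
  induction n with
  | zero => simpa [Rser] using psNorm_C 0
  | succ n ih =>
    rw [sum_range_succ] at hsum ⊢
    have hσ : 0 ≤ ∑ i ∈ range n, t i := sum_nonneg fun i hi => ht i ((mem_range.mp hi).trans n.lt_succ_self)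
    have htn : 0 ≤ t n := ht n n.lt_succ_self
    have hR := ih (fun i hi => ht i (hi.trans n.lt_succ_self)) (by linarith)
    have htanh : ‖tanh (t n)‖ₑ ≤ ENNReal.ofReal (tan (t n)) := by
      rw [enorm_eq_ofReal_abs, abs_of_nonneg (tanh_nonneg htn)]
      exact ENNReal.ofReal_le_ofReal ((tanh_le_self htn).trans (le_tan htn (by linarith)))
    calc psNorm (Rser t (n + 1))
        ≤ (psNorm (X n * Rser t n) + ‖tanh (t n)‖ₑ) *
            (1 - ‖tanh (t n)‖ₑ * psNorm (X n * Rser t n))⁻¹ :=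
          psNorm_gam_le _ (by simp)
      _ ≤ _ := by
          have hXR : psNorm (X n * Rser t n) ≤ ENNReal.ofReal (tan (∑ i ∈ range n, t i)) :=
            (psNorm_mul_le _ _).trans (by rw [psNorm_X, one_mul]; exact hR)
          rw [ENNReal.ofReal_tan_add hσ htn hsum]
          gcongr

theorem Real.tan_le_sinh_div_two_sub_cosh {x : ℝ} (hx : 0 ≤ x) (hxπ : x < π / 2)
    (hcosh : cosh x < 2) : tan x ≤ sinh x / (2 - cosh x) := by
  have h : 0 ≤ cos x * sinh x - sin x * (2 - cosh x) := by
    refine nonneg_of_hasDerivAt_nonneg (f := fun y => cos y * sinh y - sin y * (2 - cosh y)) hx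
      (fun y => ((hasDerivAt_cos y).mul (hasDerivAt_sinh y)).sub
        ((hasDerivAt_sin y).mul ((hasDerivAt_const y 2).sub (hasDerivAt_cosh y))))
      (fun y hy => ?_) (by simp)
    have hcos : 0 ≤ cos y := (cos_pos_of_mem_Ioo ⟨by linarith [pi_pos, hy.1], hy.2.trans hxπ⟩).le
    nlinarith [one_le_cosh y]
  rw [tan_eq_sin_div_cos, div_le_div_iff₀ (cos_pos_of_mem_Ioo ⟨by linarith [pi_pos], hxπ⟩)
    (by linarith)]
  linarith

theorem Real.log_two_add_sqrt_three_eq_arcosh : log (2 + √3) = arcosh 2 := by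
  norm_num [arcosh]

theorem Real.arcosh_two_lt_pi_div_two : arcosh 2 < π / 2 := by
  have hsqrt : √3 < 2 := by rw [sqrt_lt' two_pos]; norm_num
  have hlog : log (2 + √3) < 2 * log 2 := by
    rw [← log_rpow two_pos]
    exact log_lt_log (by positivity) (by norm_num; linarith)
  rw [← log_two_add_sqrt_three_eq_arcosh]
  linarith [log_two_lt_d9, pi_gt_d6]

/-- For `0 < x < log(2 + √3)` one has `f₁(x) ≤ sinh x / (2 − cosh x)`. -/
theorem fF_one_le (x : ℝ) (hx : 0 < x) (hx' : x < Real.log (2 + Real.sqrt 3)) :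
    fF 1 x ≤ ENNReal.ofReal (Real.sinh x / (2 - Real.cosh x)) := by
  rw [log_two_add_sqrt_three_eq_arcosh] at hx'
  have hxπ : x < π / 2 := hx'.trans arcosh_two_lt_pi_div_two
  have hcosh : cosh x < 2 := by
    rw [← cosh_arcosh one_le_two, cosh_lt_cosh, abs_of_pos hx,
      abs_of_nonneg (arcosh_nonneg one_le_two)]
    exact hx'
  refine iSup_le fun n => iSup_le fun t => iSup_le fun _ => iSup_le fun ht =>
    iSup_le fun hsum => ?_
  calc psNorm (Rser t n ^ 1) ≤ ENNReal.ofReal (tan x) := by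
        rw [pow_one, ← hsum]
        exact psNorm_Rser_le_tan t n (fun i hi => (ht i hi).le) (hsum ▸ hxπ)
    _ ≤ _ := ENNReal.ofReal_le_ofReal (tan_le_sinh_div_two_sub_cosh hx.le hxπ hcosh)

end
end

section
/- For every integer r ≥ 1 the function f_r is increasing: if 0 < x < y then f_r(x) ≤ f_r(y) (as elements of [0,∞]). -/
noncomputable section

/-!
Prepending a step of length `y - x` to a partition `t` of `x` gives a partition `t'` of `y`.
Setting to `0` the variable `q₁` that follows the new step, and renumbering the remaining
variables, turns `R(t')` into `R(t)`; this specialisation only discards coefficients, so it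
cannot increase the norm, whence `‖R(t)^r‖ ≤ ‖R(t')^r‖ ≤ f_r(y)`.
-/

open MvPowerSeries

namespace MvPowerSeries

variable {σ τ : Type*}

theorem constantCoeff_killCompl {R : Type*} [CommSemiring R] {e : σ ↪ τ}
    (F : MvPowerSeries τ R) : constantCoeff (killCompl e F) = constantCoeff F := by
  rw [← coeff_zero_eq_constantCoeff_apply, ← coeff_zero_eq_constantCoeff_apply, coeff_killCompl,
    Finsupp.embDomain_zero]

theorem killCompl_inv {k : Type*} [Field k] {e : σ ↪ τ} (F : MvPowerSeries τ k) :
    killCompl e F⁻¹ = (killCompl e F)⁻¹ := by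
  by_cases h : constantCoeff F = 0
  · rw [inv_eq_zero.mpr h, map_zero, eq_comm, inv_eq_zero, constantCoeff_killCompl, h]
  · rw [MvPowerSeries.eq_inv_iff_mul_eq_one (by rwa [constantCoeff_killCompl]), ← map_mul,
      MvPowerSeries.inv_mul_cancel _ h, map_one]

end MvPowerSeries

theorem killCompl_gam (e : ℕ ↪ ℕ) (τ : ℝ) (z : MvPowerSeries ℕ ℝ) :
    killCompl e (gam τ z) = gam τ (killCompl e z) := by
  simp only [gam, map_mul, map_add, map_one, killCompl_C, killCompl_inv]

theorem psNorm_killCompl_le (e : ℕ ↪ ℕ) (F : MvPowerSeries ℕ ℝ) :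
    psNorm (killCompl e F) ≤ psNorm F :=
  ENNReal.tsum_comp_le_tsum_of_injective (Finsupp.embDomain_injective e) _

/-- `killCompl skipOne` sets `X 1` to `0` and renames `X (k + 1)` to `X k` for `k ≥ 1`. -/
def skipOne : ℕ ↪ ℕ :=
  ⟨fun k => if k = 0 then 0 else k + 1, fun a b h => by
    simp only at h
    split_ifs at h <;> omega⟩

theorem skipOne_succ (k : ℕ) : skipOne (k + 1) = k + 2 := rfl

theorem one_notMem_range_skipOne : 1 ∉ Set.range skipOne := by
  rintro ⟨_ | k, hk⟩
  · exact zero_ne_one hk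
  · rw [skipOne_succ] at hk
    omega

theorem killCompl_skipOne_Rser {t t' : ℕ → ℝ} (ht' : ∀ i, t' (i + 1) = t i) (n : ℕ) :
    killCompl skipOne (Rser t' (n + 2)) = Rser t (n + 1) := by
  induction n with
  | zero =>
    simp only [Rser, killCompl_gam, map_mul, killCompl_X_eq_zero one_notMem_range_skipOne,
      zero_mul, mul_zero, ht']
  | succ n ih =>
    rw [Rser, killCompl_gam, map_mul, ih, ht', show X (n + 2) = X (skipOne (n + 1)) from rfl,
      killCompl_X]
    rfl

theorem psNorm_le_fF {r n : ℕ} {t : ℕ → ℝ} {x : ℝ} (hn : 1 ≤ n) (ht : ∀ i < n, 0 < t i)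
    (hsum : ∑ i ∈ Finset.range n, t i = x) : psNorm (Rser t n ^ r) ≤ fF r x :=
  le_iSup_of_le n <| le_iSup_of_le t <| le_iSup_of_le hn <| le_iSup_of_le ht <|
    le_iSup_of_le hsum le_rfl

theorem fF_mono_general (r : ℕ) (x y : ℝ) (hxy : x < y) :
    fF r x ≤ fF r y := by
  refine iSup_le fun n => iSup_le fun t => iSup_le fun hn => iSup_le fun ht =>
    iSup_le fun hsum => ?_
  obtain ⟨m, rfl⟩ := Nat.exists_eq_add_of_le' hn
  let t' : ℕ → ℝ := fun
    | 0 => y - x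
    | i + 1 => t i
  have ht'_pos : ∀ i < m + 2, 0 < t' i := by
    rintro (_ | i) hi
    · exact sub_pos.mpr hxy
    · exact ht i (by omega)
  have ht'_sum : ∑ i ∈ Finset.range (m + 2), t' i = y := by
    rw [Finset.sum_range_succ', hsum]
    exact add_sub_cancel x y
  calc psNorm (Rser t (m + 1) ^ r)
      = psNorm (killCompl skipOne (Rser t' (m + 2) ^ r)) := by
        rw [map_pow, killCompl_skipOne_Rser fun _ => rfl]
    _ ≤ psNorm (Rser t' (m + 2) ^ r) := psNorm_killCompl_le _ _
    _ ≤ fF r y := psNorm_le_fF (by omega) ht'_pos ht'_sum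

/-- For every integer `r ≥ 1` the function `f_r` is increasing on `(0,∞)`. -/
theorem fF_mono (r : ℕ) (hr : 1 ≤ r) (x y : ℝ) (hx : 0 < x) (hxy : x < y) :
    fF r x ≤ fF r y :=
  fF_mono_general r x y hxy

end
end
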